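/- Let G be a group, a, b ∈ G, and let T, T' be binary trees with n leaves. Set γ₀ = a, γ₁ = b, and for a word w over {0,1} let γ_w be the corresponding product in G. Then γ_{addr_T(i)} = γ_{addr_{T'}(i)} for all i = 1,...,n if and only if (ld_T(i) − ld_{T'}(i), rd_T(i) − rd_{T'}(i)) ∈ Λ_{G,a,b} for all i = 1,...,n, where Λ_{G,a,b} = { (r,s) ∈ ℤ×ℤ : b a^r b^{-1} = a b^{-s} a^{-1} }. -/

import Mathlib

/-! If leaves `i` and `i + 1` of a tree have addresses `u01ᵏ` and `u10ᵐ`, then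
`γ_{addr(i)}⁻¹ γ_{addr(i+1)} = b⁻ᵏ a⁻¹ b aᵐ` depends only on the increments `(m - 1, 1 - k)` of
the left and right depths. Two sequences in `G` agree iff their first terms and their consecutive
quotients agree, and the consecutive quotients for `T` and `T'` agree iff the increment of the
pair of depth differences lies in `Λ`. As `Λ` is a subgroup of `ℤ²`, all depth differences lie in
`Λ` iff the first one and all increments do; and the first leaves, with addresses `0ᵈ` and `0ᵈ'`,
agree iff `(d - d', 0) ∈ Λ`. -/

/-- Binary trees: every internal vertex has exactly a left and a right child. -/
inductive BTree : Type where
  | leaf : BTree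
  | node : BTree → BTree → BTree

namespace BTree

/-- Number of leaves. -/
def numLeaves : BTree → ℕ
  | leaf => 1
  | node l r => l.numLeaves + r.numLeaves

/-- Addresses of the leaves in left-to-right order, as words over `{0,1}`;
`false` records a left step (0) and `true` a right step (1). -/
def addrs : BTree → List (List Bool)
  | leaf => [[]]
  | node l r => (l.addrs.map (fun w => false :: w)) ++ (r.addrs.map (fun w => true :: w))

/-- Address of the `i`-th leaf (0-indexed, left to right). -/
def addr (T : BTree) (i : ℕ) : List Bool := T.addrs.getD i []

/-- Left depth of the `i`-th leaf: number of left steps (0's) in its address. -/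
def ld (T : BTree) (i : ℕ) : ℕ := (T.addr i).count false

/-- Right depth of the `i`-th leaf: number of right steps (1's) in its address. -/
def rd (T : BTree) (i : ℕ) : ℕ := (T.addr i).count true

/-- Total depth of the `i`-th leaf. -/
def depth (T : BTree) (i : ℕ) : ℕ := (T.addr i).length

end BTree

/-- `γ_w` for a word `w` over `{0,1}`: `γ_ε = 1`, `γ_{0w} = a·γ_w`, `γ_{1w} = b·γ_w`. -/
def gammaWord {G : Type*} [Group G] (a b : G) : List Bool → G
  | [] => 1
  | c :: w => (if c then b else a) * gammaWord a b w

namespace BTree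

lemma length_addrs (T : BTree) : T.addrs.length = T.numLeaves := by
  induction T with
  | leaf => rfl
  | node l r ihl ihr => simp [addrs, numLeaves, ihl, ihr]

lemma numLeaves_pos (T : BTree) : 0 < T.numLeaves := by
  induction T with
  | leaf => exact Nat.one_pos
  | node l r ihl _ => exact Nat.add_pos_left ihl _

lemma addr_eq_getElem (T : BTree) {i : ℕ} (h : i < T.numLeaves) :
    T.addr i = T.addrs[i]'(T.length_addrs ▸ h) :=
  List.getD_eq_getElem _ _ _

lemma addr_node_of_lt {l r : BTree} {i : ℕ} (h : i < l.numLeaves) :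
    (node l r).addr i = false :: l.addr i := by
  rw [addr_eq_getElem _ (Nat.lt_add_right _ h), addr_eq_getElem _ h]
  simp only [addrs]
  rw [List.getElem_append_left (by simpa [length_addrs] using h), List.getElem_map]

lemma addr_node_of_le {l r : BTree} {i : ℕ} (h : l.numLeaves ≤ i)
    (h' : i < (node l r).numLeaves) :
    (node l r).addr i = true :: r.addr (i - l.numLeaves) := by
  rw [addr_eq_getElem _ h', addr_eq_getElem _ (by simp only [numLeaves] at h'; omega)]
  simp only [addrs]
  rw [List.getElem_append_right (by simpa [length_addrs] using h), List.getElem_map]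
  simp [length_addrs]

lemma addr_zero (T : BTree) : ∃ d, T.addr 0 = List.replicate d false := by
  induction T with
  | leaf => exact ⟨0, rfl⟩
  | node l r ihl _ =>
    obtain ⟨d, hd⟩ := ihl
    exact ⟨d + 1, by rw [addr_node_of_lt l.numLeaves_pos, hd, List.replicate_succ]⟩

lemma addr_numLeaves_sub_one (T : BTree) :
    ∃ d, T.addr (T.numLeaves - 1) = List.replicate d true := by
  induction T with
  | leaf => exact ⟨0, rfl⟩
  | node l r _ ihr =>
    obtain ⟨d, hd⟩ := ihr
    have hl := l.numLeaves_pos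
    have hr := r.numLeaves_pos
    have hn : (node l r).numLeaves = l.numLeaves + r.numLeaves := rfl
    refine ⟨d + 1, ?_⟩
    rw [addr_node_of_le (by omega) (by omega),
      show (node l r).numLeaves - 1 - l.numLeaves = r.numLeaves - 1 by omega, hd,
      List.replicate_succ]

lemma exists_addr_eq_and_addr_succ_eq (T : BTree) {i : ℕ} (h : i + 1 < T.numLeaves) :
    ∃ u k m, T.addr i = u ++ false :: List.replicate k true ∧
      T.addr (i + 1) = u ++ true :: List.replicate m false := by
  induction T generalizing i with
  | leaf => simp [numLeaves] at h
  | node l r ihl ihr =>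
    have hn : (node l r).numLeaves = l.numLeaves + r.numLeaves := rfl
    rcases lt_trichotomy (i + 1) l.numLeaves with hi | hi | hi
    · obtain ⟨u, k, m, e, e'⟩ := ihl hi
      exact ⟨false :: u, k, m, by rw [addr_node_of_lt (by omega), e]; rfl,
        by rw [addr_node_of_lt hi, e']; rfl⟩
    · obtain ⟨k, ek⟩ := l.addr_numLeaves_sub_one
      obtain ⟨m, em⟩ := r.addr_zero
      refine ⟨[], k, m, ?_, ?_⟩
      · rw [addr_node_of_lt (by omega), show i = l.numLeaves - 1 by omega, ek]; rfl
      · rw [addr_node_of_le hi.ge h, hi, Nat.sub_self, em]; rfl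
    · obtain ⟨u, k, m, e, e'⟩ := ihr (i := i - l.numLeaves) (by omega)
      refine ⟨true :: u, k, m, ?_, ?_⟩
      · rw [addr_node_of_le (by omega) (by omega), e]; rfl
      · rw [addr_node_of_le (by omega) h, show i + 1 - l.numLeaves = i - l.numLeaves + 1 by omega,
          e']; rfl

def depthDiff (T T' : BTree) (i : ℕ) : ℤ × ℤ := ((T.ld i : ℤ) - T'.ld i, (T.rd i : ℤ) - T'.rd i)

end BTree

theorem Nat.forall_lt_iff_of_succ_iff {P S : ℕ → Prop} (hS : ∀ i, P i → (P (i + 1) ↔ S i))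
    (n : ℕ) : (∀ i < n, P i) ↔ (0 < n → P 0) ∧ ∀ i, i + 1 < n → S i := by
  constructor
  · intro hP
    exact ⟨fun hn => hP 0 hn, fun i hi => (hS i (hP i (by omega))).1 (hP (i + 1) hi)⟩
  · rintro ⟨h0, hS'⟩ i hi
    induction i with
    | zero => exact h0 hi
    | succ i ih => exact (hS i (ih (by omega))).2 (hS' i hi)

theorem forall_lt_eq_iff_inv_mul_eq {G : Type*} [Group G] (p q : ℕ → G) (n : ℕ) :
    (∀ i < n, p i = q i) ↔
      (0 < n → p 0 = q 0) ∧ ∀ i, i + 1 < n → (p i)⁻¹ * p (i + 1) = (q i)⁻¹ * q (i + 1) :=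
  Nat.forall_lt_iff_of_succ_iff (fun i hi => by rw [hi, mul_right_inj]) n

theorem AddSubgroup.forall_lt_mem_iff_sub_mem {A : Type*} [AddGroup A] (H : AddSubgroup A)
    (D : ℕ → A) (n : ℕ) :
    (∀ i < n, D i ∈ H) ↔ (0 < n → D 0 ∈ H) ∧ ∀ i, i + 1 < n → D (i + 1) - D i ∈ H :=
  Nat.forall_lt_iff_of_succ_iff
    (fun i hi => by rw [sub_eq_add_neg, H.add_mem_cancel_right (H.neg_mem hi)]) n

section Gamma

variable {G : Type*} [Group G] (a b : G)

lemma gammaWord_append (u v : List Bool) :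
    gammaWord a b (u ++ v) = gammaWord a b u * gammaWord a b v := by
  induction u with
  | nil => exact (one_mul _).symm
  | cons c w ih => rw [List.cons_append, gammaWord, gammaWord, ih, mul_assoc]

lemma gammaWord_replicate (k : ℕ) (c : Bool) :
    gammaWord a b (List.replicate k c) = (if c then b else a) ^ k := by
  induction k with
  | zero => exact (pow_zero _).symm
  | succ k ih => rw [List.replicate_succ, gammaWord, ih, pow_succ']

/-- `Λ_{G,a,b}`; it is a subgroup because it is `{(r, s) | x ^ r = y ^ s}` for
`x = b a b⁻¹` and `y = a b⁻¹ a⁻¹`. -/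
def lambdaSubgroup : AddSubgroup (ℤ × ℤ) where
  carrier := {p | b * a ^ p.1 * b⁻¹ = a * b ^ (-p.2) * a⁻¹}
  add_mem' {p q} hp hq := by
    simp only [Set.mem_ofPred_eq, ← conj_zpow] at *
    rw [Prod.fst_add, Prod.snd_add, neg_add, zpow_add, zpow_add, hp, hq]
  zero_mem' := by simp
  neg_mem' {p} hp := by
    simp only [Set.mem_ofPred_eq, ← conj_zpow] at *
    rw [Prod.fst_neg, Prod.snd_neg, zpow_neg, zpow_neg, hp]

lemma mem_lambdaSubgroup {p : ℤ × ℤ} :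
    p ∈ lambdaSubgroup a b ↔ b * a ^ p.1 * b⁻¹ = a * b ^ (-p.2) * a⁻¹ := Iff.rfl

lemma pow_eq_pow_iff_mem_lambdaSubgroup (d d' : ℕ) :
    a ^ d = a ^ d' ↔ ((d : ℤ) - d', 0) ∈ lambdaSubgroup a b := by
  rw [mem_lambdaSubgroup, neg_zero, zpow_zero, mul_one, mul_inv_cancel, conj_eq_one_iff,
    zpow_sub, zpow_natCast, zpow_natCast, mul_inv_eq_one]

lemma step_eq_iff_mem_lambdaSubgroup (x y x' y' : ℤ) :
    b ^ (y - 1) * a⁻¹ * b * a ^ (x + 1) = b ^ (y' - 1) * a⁻¹ * b * a ^ (x' + 1) ↔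
      (x - x', y - y') ∈ lambdaSubgroup a b := by
  have key : (b ^ (y - 1) * a⁻¹ * b * a ^ (x + 1)) * (b ^ (y' - 1) * a⁻¹ * b * a ^ (x' + 1))⁻¹ =
      (b ^ (y - 1) * a⁻¹) * ((b * a ^ (x - x') * b⁻¹) * (a * b ^ (-(y - y')) * a⁻¹)⁻¹) *
        (b ^ (y - 1) * a⁻¹)⁻¹ := by
    group
  rw [← mul_inv_eq_one, key, conj_eq_one_iff, mul_inv_eq_one, mem_lambdaSubgroup]

lemma gammaWord_addr_inv_mul_succ (T : BTree) {i : ℕ} (h : i + 1 < T.numLeaves) :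
    (gammaWord a b (T.addr i))⁻¹ * gammaWord a b (T.addr (i + 1)) =
      b ^ ((T.rd (i + 1) : ℤ) - T.rd i - 1) * a⁻¹ * b * a ^ ((T.ld (i + 1) : ℤ) - T.ld i + 1) := by
  obtain ⟨u, k, m, e, e'⟩ := T.exists_addr_eq_and_addr_succ_eq h
  simp only [BTree.ld, BTree.rd, e, e', gammaWord_append, gammaWord, gammaWord_replicate,
    List.count_append, List.count_cons, List.count_replicate,
    beq_true, beq_false, Bool.not_true, Bool.not_false, Bool.false_eq_true, ↓reduceIte]
  push_cast
  group

lemma gammaWord_addr_zero_eq_iff (T T' : BTree) :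
    gammaWord a b (T.addr 0) = gammaWord a b (T'.addr 0) ↔
      T.depthDiff T' 0 ∈ lambdaSubgroup a b := by
  obtain ⟨d, hd⟩ := T.addr_zero
  obtain ⟨d', hd'⟩ := T'.addr_zero
  have hD : T.depthDiff T' 0 = ((d : ℤ) - d', 0) := by
    simp [BTree.depthDiff, BTree.ld, BTree.rd, hd, hd', List.count_replicate]
  rw [hD, hd, hd', gammaWord_replicate, gammaWord_replicate]
  exact pow_eq_pow_iff_mem_lambdaSubgroup a b d d'

lemma gammaWord_addr_inv_mul_succ_eq_iff (T T' : BTree) {i : ℕ} (h : i + 1 < T.numLeaves)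
    (h' : i + 1 < T'.numLeaves) :
    (gammaWord a b (T.addr i))⁻¹ * gammaWord a b (T.addr (i + 1)) =
        (gammaWord a b (T'.addr i))⁻¹ * gammaWord a b (T'.addr (i + 1)) ↔
      T.depthDiff T' (i + 1) - T.depthDiff T' i ∈ lambdaSubgroup a b := by
  rw [gammaWord_addr_inv_mul_succ a b T h, gammaWord_addr_inv_mul_succ a b T' h',
    step_eq_iff_mem_lambdaSubgroup]
  convert Iff.rfl using 2
  ext <;> simp only [BTree.depthDiff, Prod.fst_sub, Prod.snd_sub] <;> ring

end Gamma

/-- `T` and `T'` are `(a,b)`-equivalent modulo `G` iff all the pairs of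
differences of left and right depths lie in `Λ_{G,a,b}`. -/
theorem stmt14 (G : Type*) [Group G] (a b : G) (T T' : BTree) (n : ℕ)
    (hT : T.numLeaves = n) (hT' : T'.numLeaves = n) :
    (∀ i < n, gammaWord a b (T.addr i) = gammaWord a b (T'.addr i)) ↔
      ∀ i < n,
        b * a ^ ((T.ld i : ℤ) - (T'.ld i : ℤ)) * b⁻¹
          = a * b ^ (-((T.rd i : ℤ) - (T'.rd i : ℤ))) * a⁻¹ := by
  subst hT
  refine (forall_lt_eq_iff_inv_mul_eq _ _ _).trans <| Iff.trans ?_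
    ((lambdaSubgroup a b).forall_lt_mem_iff_sub_mem (T.depthDiff T') _).symm
  exact and_congr (imp_congr_right fun _ => gammaWord_addr_zero_eq_iff a b T T')
    (forall₂_congr fun i hi => gammaWord_addr_inv_mul_succ_eq_iff a b T T' hi (hT' ▸ hi))
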